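/- For every finite non-empty S ⊂ ℤ, the covering density τ(S) is a rational number, and there exists a periodic set T ⊆ ℤ with T + S = ℤ whose density equals τ(S). -/

import Mathlib

/-!
A periodic cover of period `p` is a set `C ⊆ ℤ/pℤ` with `C + S = ℤ/pℤ`; its density is `|C|/p`.
An optimal cover of `{1, …, n}` reduces mod `n` to a periodic cover of density at most
`τ(S,n)/n`, while a periodic cover of period `p` and density `d` covers `{1, …, kp}` with
`(k + O(1)) p d` translates; so `τ(S)` is the infimum of the densities of periodic covers.
If `S ⊆ [-R, R]` and `p > 2^(2R)`, by pigeonhole two positions `i < j < p` see the same pattern of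
`C` on the next `2R` integers. Whether a point is covered depends only on `C` in a window of length
`2R`, so the pieces of `C` on `(i, j]` and on `(j, i + p]` repeat into periodic covers of periods
`j - i` and `p - (j - i)`, and by the mediant inequality one of them is at most as dense as `C`. Hence the
infimum is a minimum over the finitely many covers of period at most `2^(2R)`: it is rational and
attained.
-/

open Pointwise

/-- `τ(S,n)`: the minimal number of integer translates of `S` covering `{1,...,n}`. -/
noncomputable def tauZ (S : Finset ℤ) (n : ℕ) : ℕ :=
  sInf {m | ∃ T : Finset ℤ, T.card = m ∧ Finset.Icc (1 : ℤ) n ⊆ T + S}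

/-- The covering density `τ(S)` of a finite set `S ⊂ ℤ`, as the infimum of `τ(S,n)/n`. -/
noncomputable def covDens (S : Finset ℤ) : ℝ :=
  ⨅ n : ℕ+, (tauZ S n : ℝ) / n

open Filter Topology

/-- `C ⊆ ℤ/pℤ` stands for the `p`-periodic set `{x : ℤ | (x : ZMod p) ∈ C}`; the condition is
`C + S = ℤ/pℤ`. -/
def IsPeriodicCover (S : Finset ℤ) {p : ℕ} (C : Finset (ZMod p)) : Prop :=
  ∀ x : ℤ, ∃ s ∈ S, ((x - s : ℤ) : ZMod p) ∈ C

lemma exists_abs_le (S : Finset ℤ) : ∃ R : ℕ, ∀ s ∈ S, |s| ≤ R :=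
  ⟨S.sup Int.natAbs, fun s hs => by
    rw [Int.abs_eq_natAbs]; exact_mod_cast Finset.le_sup (f := Int.natAbs) hs⟩

lemma div_le_or_div_le_of_add_le {K : Type*} [Field K] [LinearOrder K] [IsStrictOrderedRing K]
    {a b c x y : K} (hx : 0 < x) (hy : 0 < y) (h : a + b ≤ c) :
    a / x ≤ c / (x + y) ∨ b / y ≤ c / (x + y) := by
  by_contra! h'
  rw [div_lt_div_iff₀ (by positivity) hx, div_lt_div_iff₀ (by positivity) hy] at h'
  nlinarith [h'.1, h'.2]

section Counting

variable {p : ℕ} (C : Finset (ZMod p))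

lemma card_filter_Ioc_le (i : ℤ) :
    ((Finset.Ioc i (i + p)).filter fun t : ℤ => (t : ZMod p) ∈ C).card ≤ C.card := by
  refine Finset.card_le_card_of_injOn (↑) (fun t ht => (Finset.mem_filter.1 ht).2) ?_
  intro t ht t' ht' h
  simp only [Finset.coe_filter, Finset.mem_Ioc, Set.mem_ofPred_eq] at ht ht'
  rw [ZMod.intCast_eq_intCast_iff_dvd_sub] at h
  have := Int.eq_zero_of_abs_lt_dvd h (by rw [abs_lt]; omega)
  omega

lemma card_filter_Ioc_le_mul (i : ℤ) (m : ℕ) :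
    ((Finset.Ioc i (i + m * p)).filter fun t : ℤ => (t : ZMod p) ∈ C).card ≤ m * C.card := by
  induction m with
  | zero => simp
  | succ m ih =>
    have hsplit : Finset.Ioc i (i + (m + 1 : ℕ) * p) =
        Finset.Ioc i (i + m * p) ∪ Finset.Ioc (i + m * p) (i + m * p + p) := by
      rw [Finset.Ioc_union_Ioc_eq_Ioc (le_add_of_nonneg_right (by positivity))
        (le_add_of_nonneg_right (by positivity))]
      push_cast
      ring_nf
    rw [hsplit, Finset.filter_union]
    calc _ ≤ _ + _ := Finset.card_union_le _ _
      _ ≤ m * C.card + C.card := add_le_add ih (card_filter_Ioc_le C _)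
      _ = (m + 1) * C.card := by ring

lemma ncard_setOf_intCast_mem_inter_Ico (hp : 0 < p) :
    ({x : ℤ | (x : ZMod p) ∈ C} ∩ Set.Ico 0 (p : ℤ)).ncard = C.card := by
  have : NeZero p := ⟨hp.ne'⟩
  have hval : {x : ℤ | (x : ZMod p) ∈ C} ∩ Set.Ico 0 (p : ℤ) =
      (fun c : ZMod p => (c.val : ℤ)) '' C := by
    ext x
    constructor
    · rintro ⟨hx, h0, hxp⟩
      exact ⟨x, hx, by simp only [ZMod.val_intCast, Int.emod_eq_of_lt h0 hxp]⟩
    · rintro ⟨c, hc, rfl⟩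
      exact ⟨by simpa using hc, by positivity, Int.ofNat_lt.2 c.val_lt⟩
  have hinj : Function.Injective fun c : ZMod p => (c.val : ℤ) :=
    fun c c' h => ZMod.val_injective p (Int.ofNat_inj.1 h)
  rw [hval, Set.ncard_image_of_injective _ hinj, Set.ncard_coe_finset]

end Counting

section Density

variable {S : Finset ℤ} {p : ℕ} {C : Finset (ZMod p)}

lemma exists_card_eq_tauZ (hS : S.Nonempty) (n : ℕ) :
    ∃ T : Finset ℤ, T.card = tauZ S n ∧ Finset.Icc (1 : ℤ) n ⊆ T + S := by
  obtain ⟨s, hs⟩ := hS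
  have hne : {m | ∃ T : Finset ℤ, T.card = m ∧ Finset.Icc (1 : ℤ) n ⊆ T + S}.Nonempty :=
    ⟨_, _, rfl, fun x hx =>
      Finset.mem_add.2 ⟨x - s, Finset.mem_image_of_mem (· - s) hx, s, hs, by ring⟩⟩
  exact Nat.sInf_mem hne

lemma tauZ_le_card {n : ℕ} {T : Finset ℤ} (h : Finset.Icc (1 : ℤ) n ⊆ T + S) :
    tauZ S n ≤ T.card :=
  Nat.sInf_le ⟨T, rfl, h⟩

lemma exists_isPeriodicCover_card_le_tauZ (hS : S.Nonempty) {n : ℕ} (hn : 0 < n) :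
    ∃ C : Finset (ZMod n), IsPeriodicCover S C ∧ C.card ≤ tauZ S n := by
  obtain ⟨T, hTcard, hT⟩ := exists_card_eq_tauZ hS n
  refine ⟨T.image (↑), fun x => ?_, hTcard ▸ Finset.card_image_le⟩
  have hmod := Int.emod_nonneg (x - 1) (Int.natCast_pos.2 hn).ne'
  have hmod' := Int.emod_lt_of_pos (x - 1) (Int.natCast_pos.2 hn)
  obtain ⟨t, ht, s, hs, hts⟩ :=
    Finset.mem_add.1 (hT (Finset.mem_Icc.2 ⟨by omega, by omega⟩ : (x - 1) % n + 1 ∈ _))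
  refine ⟨s, hs, Finset.mem_image.2 ⟨t, ht, ?_⟩⟩
  rw [show t = (x - 1) % n + 1 - s by omega]
  push_cast [ZMod.intCast_mod]
  ring

lemma covDens_le_tauZ_div (S : Finset ℤ) (n : ℕ+) : covDens S ≤ tauZ S n / n :=
  ciInf_le ⟨0, by rintro _ ⟨m, rfl⟩; positivity⟩ n

lemma IsPeriodicCover.tauZ_le {R : ℕ} (hR : ∀ s ∈ S, |s| ≤ R) (hp : 0 < p)
    (hC : IsPeriodicCover S C) (k : ℕ) : tauZ S (k * p) ≤ (k + 2 * R) * C.card := by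
  refine (tauZ_le_card ?_).trans (card_filter_Ioc_le_mul C (-(R * p)) (k + 2 * R))
  intro x hx
  obtain ⟨s, hs, hxs⟩ := hC x
  have hsR := abs_le.1 (hR s hs)
  have hRp : (R : ℤ) ≤ R * p := le_mul_of_one_le_right (by positivity) (by exact_mod_cast hp)
  rw [Finset.mem_Icc] at hx
  push_cast at hx ⊢
  exact Finset.mem_add.2 ⟨x - s, Finset.mem_filter.2
    ⟨Finset.mem_Ioc.2 ⟨by linarith, by linarith⟩, hxs⟩, s, hs, by ring⟩

lemma IsPeriodicCover.covDens_le (hp : 0 < p) (hC : IsPeriodicCover S C) :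
    covDens S ≤ C.card / p := by
  obtain ⟨R, hR⟩ := exists_abs_le S
  set c : ℝ := C.card / p
  have hlim : Tendsto (fun k : ℕ => c + 2 * R * c / k) atTop (𝓝 c) := by
    simpa using tendsto_const_nhds.add (tendsto_const_div_atTop_nhds_zero_nat (2 * R * c))
  refine ge_of_tendsto hlim (eventually_atTop.2 ⟨1, fun k hk => ?_⟩)
  have hpos : 0 < k * p := Nat.mul_pos hk hp
  calc covDens S ≤ tauZ S (k * p) / (k * p : ℕ) := covDens_le_tauZ_div S ⟨k * p, hpos⟩
    _ ≤ ((k + 2 * R) * C.card : ℕ) / (k * p : ℕ) := by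
      gcongr; exact hC.tauZ_le hR hp k
    _ = c + 2 * R * c / k := by
      have : (k : ℝ) ≠ 0 := by positivity
      have : (p : ℝ) ≠ 0 := by positivity
      simp only [c]; push_cast; field_simp

end Density

lemma exists_mem_Ioc_dvd_sub_of_shift {X : ℤ → Prop} {i j w : ℤ} (hij : i < j)
    (hX : ∀ u, 0 < u → u ≤ w → X (j + u) → X (i + u)) {t : ℤ} (hit : i < t) (htw : t ≤ j + w)
    (ht : X t) : ∃ t', i < t' ∧ t' ≤ j ∧ j - i ∣ t - t' ∧ X t' := by
  induction hn : (t - i).toNat using Nat.strong_induction_on generalizing t with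
  | _ n ih =>
  by_cases htj : t ≤ j
  · exact ⟨t, hit, htj, by simp, ht⟩
  have hXt : X (i + (t - j)) := hX (t - j) (by omega) (by omega) (by rwa [add_sub_cancel])
  obtain ⟨t', hit', ht'j, hdvd, ht'⟩ :=
    ih _ (by omega) (t := i + (t - j)) (by omega) (by omega) hXt rfl
  refine ⟨t', hit', ht'j, ?_, ht'⟩
  rw [show t - t' = i + (t - j) - t' + (j - i) by ring]
  exact hdvd.add dvd_rfl

section Splice

variable {S : Finset ℤ} {p : ℕ} (C : Finset (ZMod p))

/-- The part of the `p`-periodic set `C` in `(i, j]`, repeated with period `j - i`. -/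
noncomputable def repeatWindow (i j : ℕ) : Finset (ZMod (j - i)) :=
  ((Finset.Ioc (i : ℤ) j).filter fun t : ℤ => (t : ZMod p) ∈ C).image (↑)

lemma card_repeatWindow_add_card_repeatWindow_le {i j : ℕ} (hij : i ≤ j) (hjp : j ≤ i + p) :
    (repeatWindow C i j).card + (repeatWindow C j (i + p)).card ≤ C.card := by
  have hdisj : Disjoint (Finset.Ioc (i : ℤ) j) (Finset.Ioc (j : ℤ) ↑(i + p)) :=
    Finset.Ioc_disjoint_Ioc_of_le le_rfl
  calc _ ≤ ((Finset.Ioc (i : ℤ) j).filter fun t : ℤ => (t : ZMod p) ∈ C).card +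
        ((Finset.Ioc (j : ℤ) ↑(i + p)).filter fun t : ℤ => (t : ZMod p) ∈ C).card :=
        add_le_add Finset.card_image_le Finset.card_image_le
    _ = ((Finset.Ioc (i : ℤ) (i + p)).filter fun t : ℤ => (t : ZMod p) ∈ C).card := by
      rw [← Finset.card_union_of_disjoint (Finset.disjoint_filter_filter hdisj),
        ← Finset.filter_union, Finset.Ioc_union_Ioc_eq_Ioc (by omega) (by omega)]
      push_cast; rfl
    _ ≤ C.card := card_filter_Ioc_le C i

variable {C}

lemma isPeriodicCover_repeatWindow {R : ℕ} (hR : ∀ s ∈ S, |s| ≤ R) (hC : IsPeriodicCover S C)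
    {i j : ℕ} (hij : i < j)
    (hshift : ∀ u : ℤ, 0 < u → u ≤ 2 * R →
      ((j + u : ℤ) : ZMod p) ∈ C → ((i + u : ℤ) : ZMod p) ∈ C) :
    IsPeriodicCover S (repeatWindow C i j) := by
  intro x
  have hq : ((j - i : ℕ) : ℤ) = j - i := by push_cast [Nat.cast_sub hij.le]; rfl
  -- `x' ≡ x [ZMOD j - i]`, placed so that `x' - s ∈ (i, j + 2R]` for every `s ∈ S`
  set x' := i + R + 1 + (x - i - R - 1) % ((j - i : ℕ) : ℤ)
  have hmod := Int.emod_nonneg (x - i - R - 1) (b := ((j - i : ℕ) : ℤ)) (by omega)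
  have hmod' := Int.emod_lt_of_pos (x - i - R - 1) (b := ((j - i : ℕ) : ℤ)) (by omega)
  obtain ⟨s, hs, hxs⟩ := hC x'
  have hsR := abs_le.1 (hR s hs)
  obtain ⟨t', hit', ht'j, hdvd, ht'⟩ :=
    exists_mem_Ioc_dvd_sub_of_shift (X := fun t => (t : ZMod p) ∈ C) (w := 2 * R)
      (Int.ofNat_lt.2 hij) hshift (t := x' - s) (by omega) (by omega) hxs
  refine ⟨s, hs, Finset.mem_image.2
    ⟨t', Finset.mem_filter.2 ⟨Finset.mem_Ioc.2 ⟨hit', ht'j⟩, ht'⟩, ?_⟩⟩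
  rw [ZMod.intCast_eq_intCast_iff_dvd_sub, hq]
  have hxx' : x - s - t' = (x' - s - t') + (j - i) * ((x - i - R - 1) / ((j - i : ℕ) : ℤ)) := by
    rw [← hq]; simp only [x', Int.emod_def]; ring
  rw [hxx']
  exact hdvd.add (dvd_mul_right _ _)

end Splice

lemma exists_lt_lt_forall_mem_iff {p : ℕ} (C : Finset (ZMod p)) {w : ℕ} (hw : 2 ^ w < p) :
    ∃ i j : ℕ, i < j ∧ j < p ∧ ∀ u : ℤ, 0 < u → u ≤ w →
      (((i + u : ℤ) : ZMod p) ∈ C ↔ ((j + u : ℤ) : ZMod p) ∈ C) := by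
  let profile (i : ℕ) : Finset ℤ :=
    (Finset.Icc 1 (w : ℤ)).filter fun u => ((i + u : ℤ) : ZMod p) ∈ C
  have hcard : ((Finset.Icc 1 (w : ℤ)).powerset).card < (Finset.range p).card := by simpa using hw
  obtain ⟨i, hi, j, hj, hne, heq⟩ := Finset.exists_ne_map_eq_of_card_lt_of_maps_to hcard
    (f := profile) fun i _ => Finset.mem_powerset.2 (Finset.filter_subset _ _)
  have hiff : ∀ u : ℤ, 0 < u → u ≤ w →
      (((i + u : ℤ) : ZMod p) ∈ C ↔ ((j + u : ℤ) : ZMod p) ∈ C) := fun u hu hu' => by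
    simpa [profile, hu', show (1 : ℤ) ≤ u by omega] using Finset.ext_iff.1 heq u
  rcases hne.lt_or_gt with h | h
  · exact ⟨i, j, h, Finset.mem_range.1 hj, hiff⟩
  · exact ⟨j, i, h, Finset.mem_range.1 hi, fun u hu hu' => (hiff u hu hu').symm⟩

lemma IsPeriodicCover.exists_le_two_pow {S : Finset ℤ} {R : ℕ} (hR : ∀ s ∈ S, |s| ≤ R) {p : ℕ}
    (hp : 0 < p) {C : Finset (ZMod p)} (hC : IsPeriodicCover S C) :
    ∃ q, 0 < q ∧ q ≤ 2 ^ (2 * R) ∧ ∃ D : Finset (ZMod q),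
      IsPeriodicCover S D ∧ (D.card : ℚ) / q ≤ C.card / p := by
  induction p using Nat.strong_induction_on with
  | _ p ih =>
  by_cases hsmall : p ≤ 2 ^ (2 * R)
  · exact ⟨p, hp, hsmall, C, hC, le_rfl⟩
  obtain ⟨i, j, hij, hjp, hprof⟩ := exists_lt_lt_forall_mem_iff C (w := 2 * R) (by omega)
  have hperiod (u : ℤ) : (((i + p : ℕ) + u : ℤ) : ZMod p) = ((i + u : ℤ) : ZMod p) := by simp
  have h₁ := isPeriodicCover_repeatWindow hR hC hij fun u hu hu' =>
    (hprof u hu (by exact_mod_cast hu')).2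
  have h₂ := isPeriodicCover_repeatWindow (i := j) (j := i + p) hR hC (by omega) fun u hu hu' => by
    rw [hperiod]; exact (hprof u hu (by exact_mod_cast hu')).1
  have hcard := card_repeatWindow_add_card_repeatWindow_le C hij.le (by omega)
  have hsum : ((j - i : ℕ) : ℚ) + ((i + p - j : ℕ) : ℚ) = p := by
    rw [Nat.cast_sub hij.le, Nat.cast_sub (by omega)]; push_cast; ring
  rcases div_le_or_div_le_of_add_le (a := ((repeatWindow C i j).card : ℚ))
    (b := ((repeatWindow C j (i + p)).card : ℚ)) (c := (C.card : ℚ))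
    (Nat.cast_pos.2 (Nat.sub_pos_of_lt hij)) (Nat.cast_pos.2 (by omega : 0 < i + p - j))
    (by exact_mod_cast hcard) with h | h
  all_goals rw [hsum] at h
  · obtain ⟨q, hq, hqR, D, hD, hDle⟩ := ih (j - i) (by omega) (by omega) h₁
    exact ⟨q, hq, hqR, D, hD, hDle.trans h⟩
  · obtain ⟨q, hq, hqR, D, hD, hDle⟩ := ih (i + p - j) (by omega) (by omega) h₂
    exact ⟨q, hq, hqR, D, hD, hDle.trans h⟩

lemma exists_isPeriodicCover_forall_le {S : Finset ℤ} (hS : S.Nonempty) :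
    ∃ p, 0 < p ∧ ∃ C : Finset (ZMod p), IsPeriodicCover S C ∧
      ∀ q, 0 < q → ∀ D : Finset (ZMod q), IsPeriodicCover S D → (C.card : ℚ) / p ≤ D.card / q := by
  obtain ⟨R, hR⟩ := exists_abs_le S
  set N := 2 ^ (2 * R)
  set A : Set ℚ := {r | ∃ p, 0 < p ∧ p ≤ N ∧ ∃ C : Finset (ZMod p),
    IsPeriodicCover S C ∧ (C.card : ℚ) / p = r}
  have hfin : A.Finite := by
    refine ((Finset.Icc 1 N ×ˢ Finset.range (N + 1)).image
      fun pm : ℕ × ℕ => (pm.2 : ℚ) / pm.1).finite_toSet.subset ?_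
    rintro _ ⟨p, hp, hpN, C, -, rfl⟩
    have : NeZero p := ⟨hp.ne'⟩
    have hCp : C.card ≤ p := (Finset.card_le_univ C).trans_eq (ZMod.card p)
    exact Finset.mem_image.2 ⟨(p, C.card), Finset.mem_product.2
      ⟨Finset.mem_Icc.2 ⟨hp, hpN⟩, Finset.mem_range.2 (by omega)⟩, rfl⟩
  have hne : A.Nonempty := by
    obtain ⟨s, hs⟩ := hS
    exact ⟨_, 1, one_pos, Nat.one_le_two_pow, Finset.univ, fun x => ⟨s, hs, Finset.mem_univ _⟩, rfl⟩
  obtain ⟨_, ⟨p, hp, -, C, hC, rfl⟩, hmin⟩ := A.exists_min_image id hfin hne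
  refine ⟨p, hp, C, hC, fun q hq D hD => ?_⟩
  obtain ⟨q', hq', hq'N, D', hD', hle⟩ := hD.exists_le_two_pow hR hq
  exact (hmin _ ⟨q', hq', hq'N, D', hD', rfl⟩).trans hle

theorem covering_density_rational_periodic (S : Finset ℤ) (hS : S.Nonempty) :
    (∃ q : ℚ, covDens S = (q : ℝ)) ∧
    ∃ (ℓ : ℤ) (T : Set ℤ), 0 < ℓ ∧
      (∀ x : ℤ, x ∈ T ↔ x + ℓ ∈ T) ∧
      T + (S : Set ℤ) = Set.univ ∧
      ((T ∩ Set.Ico (0 : ℤ) ℓ).ncard : ℝ) / (ℓ : ℝ) = covDens S := by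
  obtain ⟨p, hp, C, hC, hopt⟩ := exists_isPeriodicCover_forall_le hS
  have hdens : covDens S = ((C.card / p : ℚ) : ℝ) := by
    refine le_antisymm (by push_cast; exact hC.covDens_le hp) (le_ciInf fun n => ?_)
    obtain ⟨D, hD, hDcard⟩ := exists_isPeriodicCover_card_le_tauZ hS n.pos
    calc ((C.card / p : ℚ) : ℝ) ≤ ((D.card / n : ℚ) : ℝ) := by exact_mod_cast hopt n n.pos D hD
      _ ≤ tauZ S n / n := by push_cast; gcongr
  refine ⟨⟨_, hdens⟩, p, {x | (x : ZMod p) ∈ C}, by exact_mod_cast hp, fun x => by simp, ?_, ?_⟩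
  · refine Set.eq_univ_of_forall fun x => ?_
    obtain ⟨s, hs, hxs⟩ := hC x
    exact ⟨x - s, hxs, s, hs, by ring⟩
  · rw [ncard_setOf_intCast_mem_inter_Ico C hp, hdens]
    push_cast
    rfl
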